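/- arXiv:math/0501116 — 5 statements merged into one kernel-verified Lean document; each statement's English description precedes it below -/
import Mathlib

section
/- For every natural number α ≥ 4, the number cos(π/α) is irrational. -/
theorem cos_pi_div_irrational (α : ℕ) (hα : 4 ≤ α) :
    Irrational (Real.cos (Real.pi / α)) := by
  have hα0 : (0:ℝ) < (α:ℝ) := by positivity
  set θ : ℝ := Real.pi / α with hθdef
  -- bounds : √2/2 ≤ cos θ < 1
  have hθpos : 0 < θ := by positivity
  have hθle : θ ≤ Real.pi / 4 := by
    rw [hθdef, div_le_div_iff₀ hα0 (by norm_num)]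
    nlinarith [Real.pi_pos, (show (4:ℝ) ≤ α by exact_mod_cast hα)]
  have hcos_ge : Real.sqrt 2 / 2 ≤ Real.cos θ := by
    rw [← Real.cos_pi_div_four]
    exact Real.cos_le_cos_of_nonneg_of_le_pi hθpos.le
      (by linarith [Real.pi_pos]) hθle
  have hcos_lt : Real.cos θ < 1 := by
    have := Real.cos_lt_cos_of_nonneg_of_le_pi (le_refl (0:ℝ))
      (by linarith [Real.pi_pos]) hθpos
    simpa using this
  -- z = exp(θ i) is a 2α-th root of unity
  set z : ℂ := Complex.exp (θ * Complex.I) with hz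
  have hzpow : z ^ (2 * α) = 1 := by
    rw [hz, ← Complex.exp_nat_mul]
    have : (2 * α : ℕ) * ((θ : ℂ) * Complex.I) = 2 * Real.pi * Complex.I := by
      have hαC : (α:ℂ) ≠ 0 := by exact_mod_cast hα0.ne'
      push_cast
      rw [hθdef]
      push_cast
      field_simp
    rw [this, Complex.exp_two_pi_mul_I]
  have hz0 : z ≠ 0 := Complex.exp_ne_zero _
  -- z is integral over ℤ
  have hzint : IsIntegral ℤ z := by
    refine ⟨Polynomial.X ^ (2 * α) - Polynomial.C 1, ?_, ?_⟩
    · apply Polynomial.monic_X_pow_sub_C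
      omega
    · simp [hzpow]
  have hzinvint : IsIntegral ℤ z⁻¹ := by
    have : z⁻¹ = z ^ (2 * α - 1) := by
      have : z * z ^ (2 * α - 1) = 1 := by
        rw [← pow_succ']
        have : 2 * α - 1 + 1 = 2 * α := by omega
        rw [this, hzpow]
      field_simp at this ⊢
      linear_combination -this
    rw [this]
    exact hzint.pow _
  have hsumint : IsIntegral ℤ (z + z⁻¹) := hzint.add hzinvint
  -- z + z⁻¹ = 2 cos θ
  have hkey : z + z⁻¹ = (2 * Real.cos θ : ℝ) := by
    rw [hz, ← Complex.exp_neg]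
    have h1 : Complex.cos θ = (Complex.exp (θ * Complex.I)
        + Complex.exp (-(θ * Complex.I))) / 2 := by
      rw [Complex.cos]
      ring_nf
    push_cast
    rw [h1]
    ring
  -- now suppose cos θ is rational
  rintro ⟨q, hq⟩
  have h2q : ((2 * q : ℚ) : ℂ) = z + z⁻¹ := by
    rw [hkey, ← hq]
    push_cast
    ring
  have hint : IsIntegral ℤ (2 * q : ℚ) := by
    have hf : Function.Injective (algebraMap ℚ ℂ).toIntAlgHom :=
      (algebraMap ℚ ℂ).injective
    rw [← isIntegral_algHom_iff (algebraMap ℚ ℂ).toIntAlgHom hf]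
    have : ((algebraMap ℚ ℂ).toIntAlgHom (2 * q)) = z + z⁻¹ := by
      simpa using h2q
    rw [this]
    exact hsumint
  obtain ⟨n, hn⟩ := IsIntegrallyClosed.isIntegral_iff.mp hint
  -- n = 2 cos θ with √2 ≤ 2 cos θ < 2 : contradiction
  have hn' : (n : ℚ) = 2 * q := by exact_mod_cast hn
  have hnR : (n : ℝ) = 2 * Real.cos θ := by
    have : ((n : ℚ) : ℝ) = 2 * Real.cos θ := by
      rw [hn']; push_cast; rw [hq]
    exact_mod_cast this
  have hs2 : (1.414 : ℝ) ≤ Real.sqrt 2 := by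
    rw [show (1.414:ℝ) = Real.sqrt (1.414^2) by
      rw [Real.sqrt_sq]; norm_num]
    apply Real.sqrt_le_sqrt
    norm_num
  have h1 : (1.414 : ℝ) ≤ (n : ℝ) := by
    rw [hnR]; nlinarith
  have h2 : (n : ℝ) < 2 := by rw [hnR]; linarith
  have : (2 : ℤ) ≤ n := by
    by_contra h
    push_neg at h
    have : n ≤ 1 := by omega
    have : (n:ℝ) ≤ 1 := by exact_mod_cast this
    linarith
  have : (2:ℝ) ≤ (n:ℝ) := by exact_mod_cast this
  linarith
end

section
/- The number cos(π/α) is a nonzero rational number if and only if α = 1 or α = 3 (for natural numbers α ≥ 1). -/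
open Real

theorem irrational_cos_pi_div_natCast {n : ℕ} (hn : 3 < n) : Irrational (cos (π / n)) := by
  have h := irrational_cos_rat_mul_pi (r := (n : ℚ)⁻¹)
    (by rwa [Rat.inv_natCast_den_of_pos (by omega)])
  simpa [div_eq_inv_mul] using h

theorem cos_pi_div_rational_nonzero_iff (α : ℕ) (hα : 1 ≤ α) :
    (∃ q : ℚ, (q : ℝ) = Real.cos (Real.pi / α) ∧ q ≠ 0) ↔ α = 1 ∨ α = 3 := by
  constructor
  · rintro ⟨q, hq, hq0⟩
    have hα3 : α ≤ 3 := by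
      by_contra! h
      exact irrational_cos_pi_div_natCast h ⟨q, hq⟩
    interval_cases α
    · exact .inl rfl
    · exact absurd (by simpa using hq) hq0
    · exact .inr rfl
  · rintro (rfl | rfl)
    · exact ⟨-1, by simp, by norm_num⟩
    · exact ⟨1 / 2, by simp [cos_pi_div_three], by norm_num⟩
end

section
/- cos(π/9) is irrational. -/
theorem cos_pi_div_nine_irrational : Irrational (Real.cos (Real.pi / 9)) := by
  have h := irrational_cos_rat_mul_pi (r := 1 / 9) (by norm_num)
  rwa [Rat.cast_div, Rat.cast_one, Rat.cast_ofNat, one_div_mul_eq_div] at h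
end

section
/- Let s be a real number and ℓ a positive integer. If sin(s n ℓ π) → 0 as n → ∞ over the natural numbers, then s ℓ is rational (and hence s is rational). -/
/-!
Put `θ = s ℓ π`. From `sin ((n + 1) θ) = sin (n θ) cos θ + cos (n θ) sin θ` we get
`cos (n θ) sin θ → 0`, and then `sin² θ = (sin (n θ) sin θ)² + (cos (n θ) sin θ)² → 0`.
Hence `sin θ = 0`, so `s ℓ` is even an integer.
-/

open Filter Topology Real

namespace Real

theorem tendsto_cos_nat_mul_mul_sin_of_tendsto_sin_nat_mul {θ : ℝ}
    (h : Tendsto (fun n : ℕ => sin (n * θ)) atTop (𝓝 0)) :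
    Tendsto (fun n : ℕ => cos (n * θ) * sin θ) atTop (𝓝 0) := by
  have h_succ : Tendsto (fun n : ℕ => sin ((n + 1 : ℕ) * θ)) atTop (𝓝 0) :=
    h.comp (tendsto_add_atTop_nat 1)
  have h_diff := h_succ.sub (h.mul_const (cos θ))
  rw [zero_mul, sub_zero] at h_diff
  refine h_diff.congr fun n => ?_
  rw [Nat.cast_succ, add_one_mul, sin_add]
  ring

theorem sin_eq_zero_of_tendsto_sin_nat_mul {θ : ℝ}
    (h : Tendsto (fun n : ℕ => sin (n * θ)) atTop (𝓝 0)) : sin θ = 0 := by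
  have h_cos := tendsto_cos_nat_mul_mul_sin_of_tendsto_sin_nat_mul h
  have h_sq : Tendsto (fun n : ℕ => (sin (n * θ) * sin θ) ^ 2 + (cos (n * θ) * sin θ) ^ 2)
      atTop (𝓝 0) := by
    simpa using ((h.mul_const (sin θ)).pow 2).add (h_cos.pow 2)
  have h_const : (fun n : ℕ => (sin (n * θ) * sin θ) ^ 2 + (cos (n * θ) * sin θ) ^ 2) =
      fun _ => sin θ ^ 2 := by
    funext n
    linear_combination sin θ ^ 2 * sin_sq_add_cos_sq (n * θ)
  rw [h_const, tendsto_const_nhds_iff] at h_sq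
  exact pow_eq_zero_iff two_ne_zero |>.mp h_sq

theorem exists_int_eq_of_sin_mul_pi_eq_zero {t : ℝ} (h : sin (t * π) = 0) :
    ∃ k : ℤ, (k : ℝ) = t := by
  obtain ⟨k, hk⟩ := sin_eq_zero_iff.mp h
  exact ⟨k, mul_right_cancel₀ pi_ne_zero hk⟩

end Real

theorem sin_tendsto_zero_rational (s : ℝ) (ℓ : ℕ) (hℓ : 0 < ℓ)
    (h : Filter.Tendsto (fun n : ℕ => Real.sin (s * n * ℓ * Real.pi)) Filter.atTop (nhds 0)) :
    (∃ q : ℚ, (q : ℝ) = s * ℓ) ∧ ∃ q : ℚ, (q : ℝ) = s := by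
  have h' : Tendsto (fun n : ℕ => sin (n * (s * ℓ * π))) atTop (𝓝 0) :=
    h.congr fun n => by ring_nf
  obtain ⟨k, hk⟩ := exists_int_eq_of_sin_mul_pi_eq_zero (sin_eq_zero_of_tendsto_sin_nat_mul h')
  have hℓ' : (ℓ : ℝ) ≠ 0 := Nat.cast_ne_zero.mpr hℓ.ne'
  refine ⟨⟨k, by exact_mod_cast hk⟩, ⟨k / ℓ, ?_⟩⟩
  push_cast
  rw [hk, mul_div_cancel_right₀ s hℓ']
end

section
/- Let s be a real number and ℓ a positive integer. If cos(s(π/2 + nℓπ)) → 0 as n → ∞ over the natural numbers, then s is rational. -/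
open Filter Real

theorem cos_tendsto_zero_rational (s : ℝ) (ℓ : ℕ) (hℓ : 0 < ℓ)
    (h : Filter.Tendsto (fun n : ℕ => Real.cos (s * (Real.pi / 2 + n * ℓ * Real.pi)))
      Filter.atTop (nhds 0)) :
    ∃ q : ℚ, (q : ℝ) = s := by
  set a : ℕ → ℝ := fun n => s * (Real.pi / 2 + n * ℓ * Real.pi) with ha
  set t : ℝ := s * (ℓ * Real.pi) with ht
  have key : ∀ n : ℕ, a (n + 1) = a n + t := by
    intro n; simp only [ha, ht]; push_cast; ring
  have h1 : Tendsto (fun n => Real.cos (a (n + 1))) atTop (nhds 0) :=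
    h.comp (tendsto_add_atTop_nat 1)
  have h2 : Tendsto (fun n => Real.sin (a n) * Real.sin t) atTop (nhds 0) := by
    have heq : (fun n => Real.sin (a n) * Real.sin t)
        = fun n => Real.cos (a n) * Real.cos t - Real.cos (a (n + 1)) := by
      funext n
      rw [key n, Real.cos_add]; ring
    rw [heq]
    have := (h.mul_const (Real.cos t)).sub h1
    simpa using this
  have h3 : Tendsto (fun n => (Real.sin (a n) * Real.sin t) ^ 2) atTop
      (nhds (Real.sin t ^ 2)) := by
    have heq : (fun n => (Real.sin (a n) * Real.sin t) ^ 2)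
        = fun n => (1 - Real.cos (a n) ^ 2) * Real.sin t ^ 2 := by
      funext n
      have := Real.sin_sq_add_cos_sq (a n)
      nlinarith [this]
    rw [heq]
    have : Tendsto (fun n => (1 - Real.cos (a n) ^ 2)) atTop (nhds 1) := by
      have := (h.pow 2)
      have := (tendsto_const_nhds (x := (1:ℝ)) (f := atTop)).sub this
      simpa using this
    simpa using this.mul_const (Real.sin t ^ 2)
  have h4 : Tendsto (fun n => (Real.sin (a n) * Real.sin t) ^ 2) atTop (nhds 0) := by
    simpa using h2.pow 2
  have hsin : Real.sin t = 0 := by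
    have := tendsto_nhds_unique h3 h4
    exact pow_eq_zero_iff (n := 2) (by norm_num) |>.mp this
  rw [Real.sin_eq_zero_iff] at hsin
  obtain ⟨k, hk⟩ := hsin
  have hπ := Real.pi_ne_zero
  have hℓ' : (ℓ : ℝ) ≠ 0 := Nat.cast_ne_zero.mpr hℓ.ne'
  have hs : s = (k : ℝ) / ℓ := by
    have hk' : (k : ℝ) * Real.pi = s * (ℓ : ℝ) * Real.pi := by rw [hk]; ring
    have := mul_right_cancel₀ hπ hk'
    field_simp
    linarith
  exact ⟨(k : ℚ) / (ℓ : ℚ), by rw [hs]; push_cast; ring⟩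
end
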